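/- arXiv:2111.09629 — 7 statements merged into one kernel-verified Lean document; each statement's English description precedes it below -/
import Mathlib

section
/- For every real u ≥ 0 and every complex number z ≠ 0 with Im z ≥ 0, the kernel k(u,z) := (sin(uz)/z)·e^{iuz} satisfies |k(u,z)| ≤ min(u, 1/|z|). -/
/-!
Writing `w = u z`, one has `sin w · e^{i w} = (1 - e^{2 i w}) · i / 2`, and `Im w ≥ 0` puts
`2 i w` in the closed left half-plane, where `|e^s| ≤ 1`. There `|e^s - 1|` is at most `2`
trivially and at most `|s|` by the mean value inequality, since `exp' = exp` is bounded by `1`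
on that convex set. Dividing by `|z|` gives the two bounds `u` and `1 / |z|`.
-/

open Complex

namespace Complex

theorem norm_exp_le_one_of_re_nonpos {s : ℂ} (hs : s.re ≤ 0) : ‖exp s‖ ≤ 1 := by
  rw [norm_exp]
  exact Real.exp_le_one_iff.mpr hs

theorem norm_exp_sub_one_le_norm_of_re_nonpos {s : ℂ} (hs : s.re ≤ 0) :
    ‖exp s - 1‖ ≤ ‖s‖ := by
  have hmvt := (convex_halfSpace_re_le (0 : ℝ)).norm_image_sub_le_of_norm_hasDerivWithin_le
    (fun x _ => (hasDerivAt_exp x).hasDerivWithinAt)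
    (fun _ hx => norm_exp_le_one_of_re_nonpos hx) (x := 0) (y := s) (le_of_eq zero_re) hs
  simpa using hmvt

theorem norm_exp_sub_one_le_two_of_re_nonpos {s : ℂ} (hs : s.re ≤ 0) : ‖exp s - 1‖ ≤ 2 :=
  calc ‖exp s - 1‖ ≤ ‖exp s‖ + ‖(1 : ℂ)‖ := norm_sub_le _ _
    _ ≤ 1 + 1 := by gcongr; exacts [norm_exp_le_one_of_re_nonpos hs, norm_one.le]
    _ = 2 := one_add_one_eq_two

theorem sin_mul_exp_I_mul (w : ℂ) : sin w * exp (I * w) = (1 - exp (2 * I * w)) * I / 2 := by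
  have hsq : exp (2 * I * w) = exp (w * I) * exp (w * I) := by
    rw [← exp_add]; ring_nf
  rw [sin, hsq, mul_comm I w, neg_mul, exp_neg]
  field_simp

theorem norm_sin_mul_exp_I_mul_le {w : ℂ} (hw : 0 ≤ w.im) :
    ‖sin w * exp (I * w)‖ ≤ min ‖w‖ 1 := by
  have hre : (2 * I * w).re ≤ 0 := by simpa using hw
  have hnorm : ‖sin w * exp (I * w)‖ = ‖exp (2 * I * w) - 1‖ / 2 := by
    rw [sin_mul_exp_I_mul, norm_div, norm_mul, norm_I, mul_one, norm_sub_rev, Complex.norm_two]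
  rw [hnorm]
  refine le_min ?_ ?_
  · have h := norm_exp_sub_one_le_norm_of_re_nonpos hre
    rw [norm_mul, norm_mul, norm_I, Complex.norm_two] at h
    linarith
  · linarith [norm_exp_sub_one_le_two_of_re_nonpos hre]

end Complex

/-- For every real `u ≥ 0` and every complex `z ≠ 0` with `Im z ≥ 0`, the kernel
`k(u,z) = (sin(uz)/z)·e^{iuz}` satisfies `|k(u,z)| ≤ min(u, 1/|z|)`. -/
theorem kernel_bound (u : ℝ) (hu : 0 ≤ u) (z : ℂ) (hz : z ≠ 0) (hzim : 0 ≤ z.im) :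
    ‖Complex.sin (u * z) / z * Complex.exp (Complex.I * u * z)‖
      ≤ min u (1 / ‖z‖) := by
  have hz_pos : 0 < ‖z‖ := norm_pos_iff.mpr hz
  have him : 0 ≤ ((u : ℂ) * z).im := by simpa using mul_nonneg hu hzim
  calc ‖sin (u * z) / z * exp (I * u * z)‖ = ‖sin (u * z) * exp (I * (u * z))‖ / ‖z‖ := by
        rw [div_mul_eq_mul_div, norm_div, mul_assoc I]
    _ ≤ min ‖(u : ℂ) * z‖ 1 / ‖z‖ := by gcongr; exact norm_sin_mul_exp_I_mul_le him
    _ = min u (1 / ‖z‖) := by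
        rw [← min_div_div_right hz_pos.le, norm_mul, norm_real, Real.norm_of_nonneg hu,
          mul_div_cancel_right₀ _ hz_pos.ne']
end

section
/- Let a : (0,∞) → (0,∞) be monotone increasing and such that â(x) := x/a(x) is also monotone increasing on (0,∞). Let q : [0,∞) → ℂ be integrable with ‖q‖_a := ∫₀^∞ a(t)|q(t)| dt < ∞, and let z ∈ ℂ with Im z ≥ 0 and z ≠ 0. Set k(u,z) := (sin(uz)/z)·e^{iuz}, g(x) := ∫ₓ^∞ k(t−x,z) q(t) dt, and ω(x) := â(1/|z|)·∫ₓ^∞ a(t)|q(t)| dt. Then there exists a bounded continuous function f : [0,∞) → ℂ satisfying the integral equation f(x) = g(x) + ∫ₓ^∞ k(t−x,z) q(t) f(t) dt for all x ≥ 0, and this solution obeys the bound |f(x)| ≤ exp(ω(x)) − 1 for all x ≥ 0. -/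
/-!
Put `K(x,t) = k(t - x) q(t)`. Writing `k(u) = (e^{2iuz} - 1)/(2iz) = ∫₀ᵘ e^{2isz} ds` gives
`|k(u)| ≤ min(u, 1/|z|)` for `Im z ≥ 0`, and the monotonicity of `a` and `â` turns this into
`|K(x,t)| ≤ w(t) := â(1/|z|) a(t) |q(t)|` for `x < t`, so that `ω(x) = ∫ₓ^∞ w`.
For the Volterra operator `V h(x) = ∫ₓ^∞ K(x,t) h(t) dt`, the identity
`∫ₓ^∞ w ω^n = ω(x)^{n+1}/(n+1)` (the fundamental theorem of calculus for the absolutely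
continuous function `ω`) gives `|Vⁿ 1| ≤ ωⁿ/n!` by induction. Hence the Neumann series
`f = ∑_{n ≥ 1} Vⁿ 1` converges uniformly, solves `f = V 1 + V f`, and `|f| ≤ e^ω - 1`.
-/

open MeasureTheory Set Filter Topology
open scoped Nat

theorem AbsolutelyContinuousOnInterval.pow_succ {f : ℝ → ℝ} {a b : ℝ}
    (hf : AbsolutelyContinuousOnInterval f a b) (n : ℕ) :
    AbsolutelyContinuousOnInterval (fun x ↦ f x ^ (n + 1)) a b := by
  induction n with
  | zero => simpa using hf
  | succ n ih => simpa only [_root_.pow_succ] using ih.fun_mul hf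

noncomputable def tailIntegral (w : ℝ → ℝ) (x : ℝ) : ℝ := ∫ t in Ici x, w t

section TailIntegral

variable {w : ℝ → ℝ} {x : ℝ}

theorem tailIntegral_sub_tailIntegral (hw : IntegrableOn w (Ici x)) {b : ℝ} (hb : x ≤ b) :
    tailIntegral w x - tailIntegral w b = ∫ t in x..b, w t := by
  simp only [tailIntegral, integral_Ici_eq_integral_Ioi]
  exact intervalIntegral.integral_Ioi_sub_Ioi (hw.mono_set Ioi_subset_Ici_self) hb

theorem tendsto_tailIntegral_atTop (hw : IntegrableOn w (Ici x)) :
    Tendsto (tailIntegral w) atTop (𝓝 0) := by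
  have hlim := intervalIntegral_tendsto_integral_Ioi x
    (hw.mono_set Ioi_subset_Ici_self) tendsto_id
  rw [← integral_Ici_eq_integral_Ioi] at hlim
  rw [← sub_self (tailIntegral w x)]
  refine ((tendsto_const_nhds (x := tailIntegral w x)).sub hlim).congr' ?_
  filter_upwards [eventually_ge_atTop x] with b hb
  rw [id, ← tailIntegral_sub_tailIntegral hw hb, sub_sub_cancel]

/-- On `[x, b]`, `tailIntegral w` agrees with the absolutely continuous `G` below, whose derivative
is `-w` almost everywhere; this is the fundamental theorem of calculus for `G ^ (n + 1)`. -/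
theorem intervalIntegral_mul_tailIntegral_pow (hw : IntegrableOn w (Ici x)) (n : ℕ) {b : ℝ}
    (hb : x ≤ b) :
    ∫ t in x..b, w t * tailIntegral w t ^ n =
      (tailIntegral w x ^ (n + 1) - tailIntegral w b ^ (n + 1)) / (n + 1) := by
  have hwi : IntervalIntegrable w volume x b :=
    (hw.mono_set (by simp [uIcc_of_le hb, Icc_subset_Ici_self])).intervalIntegrable
  set G : ℝ → ℝ := fun t ↦ tailIntegral w x - ∫ u in x..t, w u
  have hG : ∀ t, x ≤ t → tailIntegral w t = G t := fun t ht ↦ by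
    simp only [G, ← tailIntegral_sub_tailIntegral hw ht, sub_sub_cancel]
  have hGac : AbsolutelyContinuousOnInterval G x b :=
    (LipschitzWith.const (tailIntegral w x)).lipschitzOnWith.absolutelyContinuousOnInterval
      |>.fun_sub (hwi.absolutelyContinuousOnInterval_intervalIntegral left_mem_uIcc)
  have hderiv : ∀ᵐ t, t ∈ uIoc x b →
      w t * tailIntegral w t ^ n = -(deriv (fun t ↦ G t ^ (n + 1)) t / (n + 1)) := by
    filter_upwards [hwi.ae_hasDerivAt_integral] with t ht htI
    have hGd : HasDerivAt G (-w t) t :=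
      (ht (uIoc_subset_uIcc htI) x left_mem_uIcc).const_sub _
    rw [(hGd.fun_pow (n + 1)).deriv, hG t (uIoc_of_le hb ▸ htI).1.le]
    push_cast
    field_simp
  rw [intervalIntegral.integral_congr_ae hderiv, intervalIntegral.integral_neg,
    intervalIntegral.integral_div, (hGac.pow_succ n).integral_deriv_eq_sub, hG x le_rfl, hG b hb]
  ring

theorem tailIntegral_nonneg (hw0 : ∀ᵐ t ∂volume.restrict (Ici x), 0 ≤ w t) {t : ℝ}
    (ht : x ≤ t) : 0 ≤ tailIntegral w t :=
  setIntegral_nonneg_of_ae_restrict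
    (ae_restrict_of_ae_restrict_of_subset (Ici_subset_Ici.2 ht) hw0)

theorem antitoneOn_tailIntegral (hw : IntegrableOn w (Ici x))
    (hw0 : ∀ᵐ t ∂volume.restrict (Ici x), 0 ≤ w t) : AntitoneOn (tailIntegral w) (Ici x) :=
  fun _ hs _ _ hst ↦
  setIntegral_mono_set (hw.mono_set (Ici_subset_Ici.2 hs))
    (ae_restrict_of_ae_restrict_of_subset (Ici_subset_Ici.2 hs) hw0)
    (Ici_subset_Ici.2 hst).eventuallyLE

theorem integrableOn_mul_tailIntegral_pow (hw : IntegrableOn w (Ici x))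
    (hw0 : ∀ᵐ t ∂volume.restrict (Ici x), 0 ≤ w t) (n : ℕ) :
    IntegrableOn (fun t ↦ w t * tailIntegral w t ^ n) (Ici x) := by
  have hanti := antitoneOn_tailIntegral hw hw0
  refine hw.mul_bdd ((aemeasurable_restrict_of_antitoneOn measurableSet_Ici hanti).pow_const
    n).aestronglyMeasurable (c := tailIntegral w x ^ n) ?_
  filter_upwards [ae_restrict_mem measurableSet_Ici] with t ht
  rw [norm_pow, Real.norm_of_nonneg (tailIntegral_nonneg hw0 ht)]
  exact pow_le_pow_left₀ (tailIntegral_nonneg hw0 ht) (hanti self_mem_Ici ht ht) n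

theorem integral_mul_tailIntegral_pow (hw : IntegrableOn w (Ici x))
    (hw0 : ∀ᵐ t ∂volume.restrict (Ici x), 0 ≤ w t) (n : ℕ) :
    ∫ t in Ici x, w t * tailIntegral w t ^ n = tailIntegral w x ^ (n + 1) / (n + 1) := by
  have hlim := intervalIntegral_tendsto_integral_Ioi x
    ((integrableOn_mul_tailIntegral_pow hw hw0 n).mono_set Ioi_subset_Ici_self) tendsto_id
  rw [← integral_Ici_eq_integral_Ioi] at hlim
  refine tendsto_nhds_unique hlim ?_
  have hpow :=
    ((tendsto_tailIntegral_atTop hw).pow (n + 1)).const_sub (tailIntegral w x ^ (n + 1))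
  rw [zero_pow n.succ_ne_zero, sub_zero] at hpow
  refine (hpow.div_const ((n : ℝ) + 1)).congr' ?_
  filter_upwards [eventually_ge_atTop x] with b hb
  exact (intervalIntegral_mul_tailIntegral_pow hw n hb).symm

end TailIntegral

theorem hasSum_pow_succ_div_factorial (y : ℝ) :
    HasSum (fun n : ℕ ↦ y ^ (n + 1) / (n + 1)!) (Real.exp y - 1) := by
  simpa [Real.exp_eq_exp_ℝ] using
    (hasSum_nat_add_iff' 1).2 (NormedSpace.expSeries_div_hasSum_exp y)

/-- The bound is only required off the diagonal `t = x`, a null set for each `x`: in the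
application `w t` involves `a t`, and `a 0` is unconstrained. -/
structure DominatedKernel (K : ℝ → ℝ → ℂ) (w : ℝ → ℝ) : Prop where
  integrableOn : IntegrableOn w (Ici 0)
  aestronglyMeasurable : ∀ x, AEStronglyMeasurable (K x) (volume.restrict (Ici 0))
  continuous : ∀ t, Continuous fun x ↦ K x t
  norm_le : ∀ x t, 0 ≤ x → x < t → ‖K x t‖ ≤ w t

noncomputable def volterra (K : ℝ → ℝ → ℂ) (h : ℝ → ℂ) (x : ℝ) : ℂ :=
  ∫ t in Ici x, K x t * h t

namespace DominatedKernel

variable {K : ℝ → ℝ → ℂ} {w : ℝ → ℝ} {x : ℝ}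

theorem ae_norm_le (hK : DominatedKernel K w) (hx : 0 ≤ x) :
    ∀ᵐ t ∂volume.restrict (Ici x), ‖K x t‖ ≤ w t := by
  rw [Measure.restrict_congr_set Ioi_ae_eq_Ici.symm]
  exact ae_restrict_of_forall_mem measurableSet_Ioi fun t ↦ hK.norm_le x t hx

theorem ae_nonneg (hK : DominatedKernel K w) (hx : 0 ≤ x) :
    ∀ᵐ t ∂volume.restrict (Ici x), 0 ≤ w t :=
  (hK.ae_norm_le hx).mono fun _ ht ↦ (norm_nonneg _).trans ht

theorem tailIntegral_le (hK : DominatedKernel K w) (hx : 0 ≤ x) :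
    tailIntegral w x ≤ tailIntegral w 0 :=
  antitoneOn_tailIntegral hK.integrableOn (hK.ae_nonneg le_rfl) self_mem_Ici hx hx

theorem pow_div_factorial_le (hK : DominatedKernel K w) (n : ℕ) (hx : 0 ≤ x) :
    tailIntegral w x ^ n / n ! ≤ tailIntegral w 0 ^ n / n ! := by
  gcongr
  · exact tailIntegral_nonneg (hK.ae_nonneg le_rfl) hx
  · exact hK.tailIntegral_le hx

theorem integrableOn_volterra_integrand (hK : DominatedKernel K w) {h : ℝ → ℂ}
    (hh : AEStronglyMeasurable h (volume.restrict (Ici 0))) {M : ℝ}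
    (hM : ∀ t, 0 ≤ t → ‖h t‖ ≤ M) (hx : 0 ≤ x) :
    IntegrableOn (fun t ↦ K x t * h t) (Ici x) := by
  refine Integrable.mono' ((hK.integrableOn.mono_set (Ici_subset_Ici.2 hx)).mul_const M)
    (((hK.aestronglyMeasurable x).mul hh).mono_measure
      (Measure.restrict_mono (Ici_subset_Ici.2 hx) le_rfl)) ?_
  filter_upwards [hK.ae_norm_le hx, ae_restrict_mem measurableSet_Ici] with t hKt ht
  rw [norm_mul]
  exact mul_le_mul hKt (hM t (hx.trans ht)) (norm_nonneg _) ((norm_nonneg _).trans hKt)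

theorem continuousOn_volterra (hK : DominatedKernel K w) {h : ℝ → ℂ}
    (hh : AEStronglyMeasurable h (volume.restrict (Ici 0))) {M : ℝ}
    (hM : ∀ t, 0 ≤ t → ‖h t‖ ≤ M) :
    ContinuousOn (volterra K h) (Ici 0) := by
  have hrepr : EqOn (fun x ↦ ∫ t in Ici 0, (Ioi x).indicator (fun t ↦ K x t * h t) t)
      (volterra K h) (Ici 0) := fun x hx ↦ by
    dsimp only
    rw [setIntegral_indicator measurableSet_Ioi, volterra, integral_Ici_eq_integral_Ioi,
      inter_eq_right.2 (Ioi_subset_Ici hx)]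
  refine ContinuousOn.congr (fun x₀ _ ↦ ?_) hrepr.symm
  refine continuousWithinAt_of_dominated (bound := fun t ↦ w t * M)
    (Eventually.of_forall fun x ↦ ((hK.aestronglyMeasurable x).mul hh).indicator
      measurableSet_Ioi) ?_ (hK.integrableOn.mul_const M) ?_
  · filter_upwards [self_mem_nhdsWithin] with x (hx : 0 ≤ x)
    filter_upwards [hK.ae_nonneg le_rfl, ae_restrict_mem measurableSet_Ici] with t hwt ht
    by_cases hxt : x < t
    · rw [indicator_of_mem (show t ∈ Ioi x from hxt), norm_mul]
      exact mul_le_mul (hK.norm_le x t hx hxt) (hM t ht) (norm_nonneg _) hwt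
    · rw [indicator_of_notMem (show t ∉ Ioi x from hxt), norm_zero]
      exact mul_nonneg hwt ((norm_nonneg _).trans (hM t ht))
  · filter_upwards [ae_restrict_of_ae (volume.ae_ne x₀)] with t ht
    refine ContinuousAt.continuousWithinAt ?_
    rcases ht.lt_or_gt with htx | hxt
    · refine (continuousAt_const (y := (0 : ℂ))).congr ?_
      filter_upwards [lt_mem_nhds htx] with x hx
      rw [indicator_of_notMem (show t ∉ Ioi x from not_lt.2 hx.le)]
    · refine ((hK.continuous t).continuousAt.mul (continuousAt_const (y := h t))).congr ?_
      filter_upwards [gt_mem_nhds hxt] with x hx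
      rw [indicator_of_mem (show t ∈ Ioi x from hx), Pi.mul_apply]

theorem integral_norm_volterra_integrand_le (hK : DominatedKernel K w) {h : ℝ → ℂ}
    (hh : AEStronglyMeasurable h (volume.restrict (Ici 0))) {n : ℕ}
    (hhn : ∀ t, 0 ≤ t → ‖h t‖ ≤ tailIntegral w t ^ n / n !) (hx : 0 ≤ x) :
    ∫ t in Ici x, ‖K x t * h t‖ ≤ tailIntegral w x ^ (n + 1) / (n + 1)! := by
  have hwx := hK.integrableOn.mono_set (Ici_subset_Ici.2 hx)
  calc ∫ t in Ici x, ‖K x t * h t‖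
      ≤ ∫ t in Ici x, w t * tailIntegral w t ^ n / n ! := by
        refine integral_mono_ae (hK.integrableOn_volterra_integrand hh
            (fun t ht ↦ (hhn t ht).trans (hK.pow_div_factorial_le n ht)) hx).norm
          ((integrableOn_mul_tailIntegral_pow hwx (hK.ae_nonneg hx) n).div_const _) ?_
        filter_upwards [hK.ae_norm_le hx, ae_restrict_mem measurableSet_Ici] with t hKt ht
        rw [norm_mul, mul_div_assoc]
        exact mul_le_mul hKt (hhn t (hx.trans ht)) (norm_nonneg _) ((norm_nonneg _).trans hKt)
    _ = tailIntegral w x ^ (n + 1) / (n + 1)! := by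
        rw [integral_div, integral_mul_tailIntegral_pow hwx (hK.ae_nonneg hx),
          Nat.factorial_succ, Nat.cast_mul, div_div]
        push_cast
        ring

theorem iterate_volterra_one (hK : DominatedKernel K w) (n : ℕ) :
    ContinuousOn ((volterra K)^[n] 1) (Ici 0) ∧
      ∀ x, 0 ≤ x → ‖(volterra K)^[n] 1 x‖ ≤ tailIntegral w x ^ n / n ! := by
  induction n with
  | zero => exact ⟨continuous_one.continuousOn, fun x _ ↦ by simp⟩
  | succ n ih =>
    have hh := ih.1.aestronglyMeasurable (μ := volume) measurableSet_Ici
    rw [Function.iterate_succ_apply']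
    refine ⟨hK.continuousOn_volterra hh fun t ht ↦ (ih.2 t ht).trans
      (hK.pow_div_factorial_le n ht), fun x hx ↦ ?_⟩
    exact (norm_integral_le_integral_norm _).trans
      (hK.integral_norm_volterra_integrand_le hh ih.2 hx)

theorem tsum_volterra (hK : DominatedKernel K w) {h : ℕ → ℝ → ℂ}
    (hh : ∀ n, AEStronglyMeasurable (h n) (volume.restrict (Ici 0)))
    (hhn : ∀ n t, 0 ≤ t → ‖h n t‖ ≤ tailIntegral w t ^ (n + 1) / (n + 1)!)
    (hx : 0 ≤ x) :
    ∑' n, volterra K (h n) x = volterra K (fun t ↦ ∑' n, h n t) x := by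
  simp only [volterra]
  rw [integral_tsum_of_summable_integral_norm (fun n ↦ hK.integrableOn_volterra_integrand (hh n)
    (fun t ht ↦ (hhn n t ht).trans (hK.pow_div_factorial_le _ ht)) hx)]
  · simp_rw [tsum_mul_left]
  · exact Summable.of_nonneg_of_le (fun n ↦ integral_nonneg fun _ ↦ norm_nonneg _)
      (fun n ↦ hK.integral_norm_volterra_integrand_le (hh n) (hhn n) hx)
      ((summable_nat_add_iff 2).2 (Real.summable_pow_div_factorial _))

theorem exists_solution_norm_le_exp_sub_one (hK : DominatedKernel K w) :
    ∃ f : ℝ → ℂ, ContinuousOn f (Ici 0) ∧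
      (∀ x ∈ Ici (0 : ℝ), f x = volterra K 1 x + volterra K f x) ∧
      ∀ x ∈ Ici (0 : ℝ), ‖f x‖ ≤ Real.exp (tailIntegral w x) - 1 := by
  have hiter := hK.iterate_volterra_one
  have hbound : ∀ n x, 0 ≤ x →
      ‖(volterra K)^[n + 1] 1 x‖ ≤ tailIntegral w x ^ (n + 1) / (n + 1)! :=
    fun n ↦ (hiter (n + 1)).2
  have hmajor : ∀ n, ∀ x ∈ Ici (0 : ℝ),
      ‖(volterra K)^[n + 1] 1 x‖ ≤ tailIntegral w 0 ^ (n + 1) / (n + 1)! :=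
    fun n x hx ↦ (hbound n x hx).trans (hK.pow_div_factorial_le _ hx)
  have hsum := (hasSum_pow_succ_div_factorial (tailIntegral w 0)).summable
  refine ⟨fun x ↦ ∑' n, (volterra K)^[n + 1] 1 x,
    continuousOn_tsum (fun n ↦ (hiter (n + 1)).1) hsum hmajor, fun x hx ↦ ?_,
    fun x hx ↦ tsum_of_norm_bounded (hasSum_pow_succ_div_factorial _) fun n ↦ hbound n x hx⟩
  dsimp only
  rw [(hsum.of_norm_bounded fun n ↦ hmajor n x hx).tsum_eq_zero_add,
    ← hK.tsum_volterra (fun n ↦ (hiter (n + 1)).1.aestronglyMeasurable measurableSet_Ici)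
      hbound hx]
  simp only [Function.iterate_succ_apply']
  rfl

end DominatedKernel

section JostKernel

open Complex

variable {z : ℂ}

theorem sin_div_mul_exp_eq (hz : z ≠ 0) (u : ℝ) :
    sin (u * z) / z * exp (I * u * z) = (exp (2 * I * u * z) - 1) / (2 * I * z) := by
  have hsq : exp (2 * I * u * z) = exp (I * u * z) * exp (I * u * z) := by
    rw [← exp_add]; ring_nf
  rw [sin, hsq, show -(u * z) * I = -(I * u * z) by ring, show u * z * I = I * u * z by ring,
    exp_neg]
  have := exp_ne_zero (I * u * z)
  field_simp
  ring_nf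
  rw [I_sq]
  ring

theorem norm_exp_two_I_mul_le_one (hzim : 0 ≤ z.im) {u : ℝ} (hu : 0 ≤ u) :
    ‖exp (2 * I * u * z)‖ ≤ 1 := by
  rw [norm_exp, Real.exp_le_one_iff]
  simp only [mul_re, mul_im, I_re, I_im, ofReal_re, ofReal_im, re_ofNat, im_ofNat]
  nlinarith

theorem hasDerivAt_exp_two_I_mul_sub_one_div (hz : z ≠ 0) (u : ℝ) :
    HasDerivAt (fun u : ℝ ↦ (exp (2 * I * u * z) - 1) / (2 * I * z))
      (exp (2 * I * u * z)) u := by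
  have hlin : HasDerivAt (fun u : ℝ ↦ 2 * I * u * z) (2 * I * z) u := by
    simpa using (((hasDerivAt_id (u : ℂ)).const_mul (2 * I)).mul_const z).comp_ofReal
  have h2Iz : 2 * I * z ≠ 0 := by simp [hz, I_ne_zero]
  simpa [mul_div_cancel_right₀ _ h2Iz] using (hlin.cexp.sub_const 1).div_const (2 * I * z)

theorem norm_sin_div_mul_exp_le (hz : z ≠ 0) (hzim : 0 ≤ z.im) {u : ℝ} (hu : 0 ≤ u) :
    ‖sin (u * z) / z * exp (I * u * z)‖ ≤ min u (1 / ‖z‖) := by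
  rw [sin_div_mul_exp_eq hz]
  refine le_min ?_ ?_
  · simpa using norm_image_sub_le_of_norm_deriv_le_segment'
      (fun t _ ↦ (hasDerivAt_exp_two_I_mul_sub_one_div hz t).hasDerivWithinAt)
      (fun t ht ↦ norm_exp_two_I_mul_le_one hzim ht.1) u ⟨hu, le_rfl⟩
  · rw [norm_div, div_le_div_iff₀ (by simp [hz]) (norm_pos_iff.2 hz)]
    calc ‖exp (2 * I * u * z) - 1‖ * ‖z‖
        ≤ (‖exp (2 * I * u * z)‖ + ‖(1 : ℂ)‖) * ‖z‖ := by
          gcongr; exact norm_sub_le _ _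
      _ ≤ 1 * ‖2 * I * z‖ := by
          rw [norm_mul, norm_mul, norm_I, RCLike.norm_ofNat, norm_one]
          nlinarith [norm_exp_two_I_mul_le_one hzim hu, norm_nonneg z]

end JostKernel

theorem min_le_div_mul_of_monotone {a : ℝ → ℝ} (ha_pos : ∀ x : ℝ, 0 < x → 0 < a x)
    (ha_mono : ∀ x y : ℝ, 0 < x → x ≤ y → a x ≤ a y)
    (hahat_mono : ∀ x y : ℝ, 0 < x → x ≤ y → x / a x ≤ y / a y)
    {r u t : ℝ} (hr : 0 < r) (hu : 0 < u) (hut : u ≤ t) : min u r ≤ r / a r * a t := by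
  have hhat : 0 ≤ r / a r := div_nonneg hr.le (ha_pos r hr).le
  rcases le_total u r with hur | hru
  · calc min u r = u / a u * a u := by
          rw [min_eq_left hur, div_mul_cancel₀ _ (ha_pos u hu).ne']
      _ ≤ r / a r * a t :=
        mul_le_mul (hahat_mono u r hu hur) (ha_mono u t hu hut) (ha_pos u hu).le hhat
  · calc min u r = r / a r * a r := by
          rw [min_eq_right hru, div_mul_cancel₀ _ (ha_pos r hr).ne']
      _ ≤ r / a r * a t := mul_le_mul_of_nonneg_left (ha_mono r t hr (hru.trans hut)) hhat

theorem dominatedKernel_jost {a : ℝ → ℝ} (ha_pos : ∀ x : ℝ, 0 < x → 0 < a x)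
    (ha_mono : ∀ x y : ℝ, 0 < x → x ≤ y → a x ≤ a y)
    (hahat_mono : ∀ x y : ℝ, 0 < x → x ≤ y → x / a x ≤ y / a y)
    {q : ℝ → ℂ} (hq : IntegrableOn q (Ici 0))
    (hqa : IntegrableOn (fun t ↦ a t * ‖q t‖) (Ici 0))
    {z : ℂ} (hzim : 0 ≤ z.im) (hz : z ≠ 0) :
    DominatedKernel
      (fun x t ↦
        Complex.sin (↑(t - x) * z) / z * Complex.exp (Complex.I * ↑(t - x) * z) * q t)
      (fun t ↦ (1 / ‖z‖) / a (1 / ‖z‖) * (a t * ‖q t‖)) := by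
  refine ⟨hqa.const_mul _, fun x ↦ ?_, fun t ↦ by fun_prop, fun x t hx hxt ↦ ?_⟩
  · exact (Continuous.aestronglyMeasurable (by fun_prop)).mul hq.aestronglyMeasurable
  · rw [norm_mul, ← mul_assoc]
    gcongr
    exact (norm_sin_div_mul_exp_le hz hzim (sub_nonneg.2 hxt.le)).trans
      (min_le_div_mul_of_monotone ha_pos ha_mono hahat_mono (by simp [hz])
        (sub_pos.2 hxt) (by linarith))

/-- Existence and bound for the solution of the Jost integral equation on the half-line,
for a potential `q` integrable with weight `a`, where both `a` and `â(x) = x / a(x)` are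
monotone increasing on `(0,∞)`.  There is a bounded continuous solution `f` of
`f(x) = g(x) + ∫ₓ^∞ k(t−x,z) q(t) f(t) dt` satisfying `|f(x)| ≤ exp(ω(x)) − 1`. -/
theorem jost_integral_equation_bound
    (a : ℝ → ℝ) (ha_pos : ∀ x : ℝ, 0 < x → 0 < a x)
    (ha_mono : ∀ x y : ℝ, 0 < x → x ≤ y → a x ≤ a y)
    (hahat_mono : ∀ x y : ℝ, 0 < x → x ≤ y → x / a x ≤ y / a y)
    (q : ℝ → ℂ) (hq : IntegrableOn q (Set.Ici 0))
    (hqa : IntegrableOn (fun t => a t * ‖q t‖) (Set.Ici 0))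
    (z : ℂ) (hzim : 0 ≤ z.im) (hz : z ≠ 0)
    (k : ℝ → ℂ)
    (hk : ∀ u : ℝ, k u = Complex.sin (u * z) / z * Complex.exp (Complex.I * u * z))
    (g : ℝ → ℂ) (hg : ∀ x : ℝ, g x = ∫ t in Set.Ici x, k (t - x) * q t)
    (ω : ℝ → ℝ)
    (hω : ∀ x : ℝ, ω x =
      (1 / ‖z‖) / a (1 / ‖z‖) *
        ∫ t in Set.Ici x, a t * ‖q t‖) :
    ∃ f : ℝ → ℂ,
      ContinuousOn f (Set.Ici 0) ∧
      (∃ C : ℝ, ∀ x ∈ Set.Ici (0 : ℝ), ‖f x‖ ≤ C) ∧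
      (∀ x ∈ Set.Ici (0 : ℝ), f x = g x + ∫ t in Set.Ici x, k (t - x) * q t * f t) ∧
      (∀ x ∈ Set.Ici (0 : ℝ), ‖f x‖ ≤ Real.exp (ω x) - 1) := by
  obtain rfl : k = _ := funext hk
  obtain rfl : ω = tailIntegral _ :=
    funext fun x ↦ by rw [hω, tailIntegral, ← integral_const_mul]
  have hK := dominatedKernel_jost ha_pos ha_mono hahat_mono hq hqa hzim hz
  obtain ⟨f, hf_cont, hf_eq, hf_le⟩ := hK.exists_solution_norm_le_exp_sub_one
  refine ⟨f, hf_cont, ⟨_, fun x hx ↦ (hf_le x hx).trans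
    (sub_le_sub_right (Real.exp_le_exp.2 (hK.tailIntegral_le hx)) 1)⟩, fun x hx ↦ ?_, hf_le⟩
  simpa [hg, volterra] using hf_eq x hx
end

section
/- For every complex number z with Im z > 0, setting w = (z−i)/(z+i) (so that |w| < 1), one has (Im z)/(1+|z|²) ≤ 1 − |w| ≤ 8·(Im z)/(1+|z|²). -/
/-! With `a = |z - i|` and `b = |z + i|` one has `b² - a² = 4 Im z` and `a² + b² = 2 (1 + |z|²)`,
so both bounds reduce to estimating `1 - a/b = (b² - a²) / (b (a + b))` for `0 ≤ a ≤ b`, where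
`b (a + b)` lies between `(a² + b²) / 2` and `2 (a² + b²)`. -/

open Complex

lemma sq_sub_sq_div_le_one_sub_div {a b : ℝ} (hab : a ≤ b) (hb : 0 < b) :
    (b ^ 2 - a ^ 2) / (2 * (a ^ 2 + b ^ 2)) ≤ 1 - a / b := by
  have hsum : 0 < a ^ 2 + b ^ 2 := by positivity
  rw [div_le_iff₀ (by positivity), one_sub_div hb.ne', div_mul_eq_mul_div, le_div_iff₀ hb]
  nlinarith [mul_nonneg (sub_nonneg.2 hab) (sq_nonneg (a - b))]

lemma one_sub_div_le_sq_sub_sq_div {a b : ℝ} (ha : 0 ≤ a) (hab : a ≤ b) (hb : 0 < b) :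
    1 - a / b ≤ 2 * (b ^ 2 - a ^ 2) / (a ^ 2 + b ^ 2) := by
  rw [le_div_iff₀ (by positivity), one_sub_div hb.ne', div_mul_eq_mul_div, div_le_iff₀ hb]
  nlinarith [mul_nonneg (sub_nonneg.2 hab) (mul_nonneg ha hb.le),
    mul_nonneg (sub_nonneg.2 hab) (mul_nonneg hb.le hb.le)]

lemma norm_add_I_sq_sub_norm_sub_I_sq (z : ℂ) : ‖z + I‖ ^ 2 - ‖z - I‖ ^ 2 = 4 * z.im := by
  simp only [Complex.sq_norm, normSq_apply, add_re, sub_re, add_im, sub_im, I_re, I_im]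
  ring

lemma norm_sub_I_sq_add_norm_add_I_sq (z : ℂ) :
    ‖z - I‖ ^ 2 + ‖z + I‖ ^ 2 = 2 * (1 + ‖z‖ ^ 2) := by
  simp only [Complex.sq_norm, normSq_apply, add_re, sub_re, add_im, sub_im, I_re, I_im]
  ring

/-- For `Im z > 0`, with `w = (z−i)/(z+i)` (so `|w| < 1`):
`Im z/(1+|z|²) ≤ 1 − |w| ≤ 8·Im z/(1+|z|²)`. -/
theorem one_sub_abs_cayley_bounds (z : ℂ) (hz : 0 < z.im) :
    z.im / (1 + ‖z‖ ^ 2) ≤ 1 - ‖(z - Complex.I) / (z + Complex.I)‖ ∧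
    1 - ‖(z - Complex.I) / (z + Complex.I)‖ ≤
      8 * z.im / (1 + ‖z‖ ^ 2) := by
  have hdiff := norm_add_I_sq_sub_norm_sub_I_sq z
  have hsum := norm_sub_I_sq_add_norm_add_I_sq z
  have hle : ‖z - I‖ ≤ ‖z + I‖ := (sq_le_sq₀ (norm_nonneg _) (norm_nonneg _)).1 (by linarith)
  have hpos : 0 < ‖z + I‖ := norm_pos_iff.2 fun h ↦ by
    have := congrArg im h
    simp only [add_im, I_im, zero_im] at this
    linarith
  have hlower := sq_sub_sq_div_le_one_sub_div hle hpos
  have hupper := one_sub_div_le_sq_sub_sq_div (norm_nonneg _) hle hpos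
  rw [hdiff, hsum, ← norm_div] at hlower hupper
  constructor
  · calc z.im / (1 + ‖z‖ ^ 2) = 4 * z.im / (4 * (1 + ‖z‖ ^ 2)) :=
          (mul_div_mul_left _ _ four_ne_zero).symm
      _ = 4 * z.im / (2 * (2 * (1 + ‖z‖ ^ 2))) := by ring
      _ ≤ _ := hlower
  · calc _ ≤ 2 * (4 * z.im) / (2 * (1 + ‖z‖ ^ 2)) := hupper
      _ = 4 * z.im / (1 + ‖z‖ ^ 2) := mul_div_mul_left _ _ two_ne_zero
      _ ≤ 8 * z.im / (1 + ‖z‖ ^ 2) := by gcongr; linarith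
end

section
/- Let θ be a real number with −π < θ < π. Then the maximum over r ∈ [0,1] of |(1 − r·e^{iθ})/(1 + r·e^{iθ})| equals 1 if |θ| ≤ π/2, and equals |tan(θ/2)| if π/2 < |θ| < π. -/
open Real

/-!
With `z = e^{iθ}` and `c = cos θ` one has `‖1 ± r z‖² = 1 ± 2rc + r²`, so the squared modulus of the
quotient is `(1 - 2rc + r²) / (1 + 2rc + r²)`. For `c ≥ 0` this is at most `1`, its value at `r = 0`.
For `-1 < c ≤ 0` it is at most its value `(1 - c) / (1 + c) = tan²(θ/2)` at `r = 1`: after clearing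
denominators the difference is `-2c(1 - r)² ≥ 0`.
-/

open Complex in
lemma norm_one_add_ofReal_mul_exp_sq (r θ : ℝ) :
    ‖1 + (r : ℂ) * exp (θ * I)‖ ^ 2 = 1 + 2 * r * Real.cos θ + r ^ 2 := by
  rw [Complex.sq_norm, normSq_apply]
  simp only [add_re, add_im, one_re, one_im, re_ofReal_mul, im_ofReal_mul,
    exp_ofReal_mul_I_re, exp_ofReal_mul_I_im]
  linear_combination r ^ 2 * Real.sin_sq_add_cos_sq θ

open Complex in
lemma norm_one_sub_ofReal_mul_exp_sq (r θ : ℝ) :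
    ‖1 - (r : ℂ) * exp (θ * I)‖ ^ 2 = 1 - 2 * r * Real.cos θ + r ^ 2 := by
  simpa [sub_eq_add_neg] using norm_one_add_ofReal_mul_exp_sq (-r) θ

open Complex in
lemma norm_one_sub_div_one_add_ofReal_mul_exp_sq (r θ : ℝ) :
    ‖(1 - (r : ℂ) * exp (θ * I)) / (1 + (r : ℂ) * exp (θ * I))‖ ^ 2
      = (1 - 2 * r * Real.cos θ + r ^ 2) / (1 + 2 * r * Real.cos θ + r ^ 2) := by
  rw [norm_div, div_pow, norm_one_sub_ofReal_mul_exp_sq, norm_one_add_ofReal_mul_exp_sq]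

lemma one_sub_div_one_add_le_one {c r : ℝ} (hc : 0 ≤ c) (hr : 0 ≤ r) :
    (1 - 2 * r * c + r ^ 2) / (1 + 2 * r * c + r ^ 2) ≤ 1 :=
  div_le_one_of_le₀ (by nlinarith) (by positivity)

lemma one_sub_div_one_add_le_of_nonpos {c : ℝ} (hc₁ : -1 < c) (hc₂ : c ≤ 0) (r : ℝ) :
    (1 - 2 * r * c + r ^ 2) / (1 + 2 * r * c + r ^ 2) ≤ (1 - c) / (1 + c) := by
  have hden : 0 < 1 + 2 * r * c + r ^ 2 := by nlinarith [sq_nonneg (r + c)]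
  rw [div_le_div_iff₀ hden (by linarith)]
  nlinarith [mul_nonneg (neg_nonneg.2 hc₂) (sq_nonneg (1 - r))]

lemma neg_one_lt_cos_of_abs_lt_pi {θ : ℝ} (h : |θ| < π) : -1 < cos θ := by
  rw [← cos_abs, ← cos_pi]
  exact cos_lt_cos_of_nonneg_of_le_pi (abs_nonneg θ) le_rfl h

lemma cos_nonneg_of_abs_le_pi_div_two {θ : ℝ} (h : |θ| ≤ π / 2) : 0 ≤ cos θ := by
  rw [← cos_abs]
  exact cos_nonneg_of_neg_pi_div_two_le_of_le (by linarith [abs_nonneg θ, pi_pos]) h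

lemma cos_nonpos_of_pi_div_two_le_abs {θ : ℝ} (h₁ : π / 2 ≤ |θ|) (h₂ : |θ| ≤ π + π / 2) :
    cos θ ≤ 0 := by
  rw [← cos_abs]
  exact cos_nonpos_of_pi_div_two_le_of_le h₁ h₂

-- At `cos θ = -1` both sides are `0`, by the junk value of division by zero.
lemma tan_half_sq (θ : ℝ) : tan (θ / 2) ^ 2 = (1 - cos θ) / (1 + cos θ) := by
  have hcos : cos θ = 2 * cos (θ / 2) ^ 2 - 1 := by rw [← cos_two_mul]; ring_nf
  rw [tan_eq_sin_div_cos, div_pow, sin_sq, hcos]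
  ring

lemma isGreatest_image_of_forall_le {α β : Type*} [Preorder β] {f : α → β} {s : Set α} {a : α}
    (ha : a ∈ s) (h : ∀ x ∈ s, f x ≤ f a) : IsGreatest (f '' s) (f a) :=
  ⟨Set.mem_image_of_mem f ha, Set.forall_mem_image.2 h⟩

/-- For `−π < θ < π`, the maximum over `r ∈ [0,1]` of `|(1 − r·e^{iθ})/(1 + r·e^{iθ})|`
equals `1` if `|θ| ≤ π/2`, and equals `|tan(θ/2)|` if `π/2 < |θ| < π`. -/
theorem max_abs_mobius_on_radius (θ : ℝ) (hθ₁ : -π < θ) (hθ₂ : θ < π) :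
    (|θ| ≤ π / 2 →
      IsGreatest ((fun r : ℝ =>
        ‖((1 - (r : ℂ) * Complex.exp (θ * Complex.I)) /
          (1 + (r : ℂ) * Complex.exp (θ * Complex.I)))‖) '' Set.Icc 0 1) 1) ∧
    (π / 2 < |θ| →
      IsGreatest ((fun r : ℝ =>
        ‖((1 - (r : ℂ) * Complex.exp (θ * Complex.I)) /
          (1 + (r : ℂ) * Complex.exp (θ * Complex.I)))‖) '' Set.Icc 0 1)
        |Real.tan (θ / 2)|) := by
  set F : ℝ → ℝ := fun r =>
    ‖(1 - (r : ℂ) * Complex.exp (θ * Complex.I)) / (1 + (r : ℂ) * Complex.exp (θ * Complex.I))‖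
  have hF_sq (r : ℝ) : F r ^ 2
      = (1 - 2 * r * cos θ + r ^ 2) / (1 + 2 * r * cos θ + r ^ 2) :=
    norm_one_sub_div_one_add_ofReal_mul_exp_sq r θ
  have hF_le {r s : ℝ} (h : F r ^ 2 ≤ F s ^ 2) : F r ≤ F s :=
    (sq_le_sq₀ (norm_nonneg _) (norm_nonneg _)).1 h
  have hθ : |θ| < π := abs_lt.2 ⟨hθ₁, hθ₂⟩
  refine ⟨fun hθ_le => ?_, fun hθ_lt => ?_⟩
  · have hF0 : F 0 = 1 := by simp [F]
    have h := isGreatest_image_of_forall_le (f := F) (s := Set.Icc 0 1) (a := 0)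
      ⟨le_rfl, zero_le_one⟩ fun r hr => hF_le <| by
        rw [hF_sq, hF0, one_pow]
        exact one_sub_div_one_add_le_one (cos_nonneg_of_abs_le_pi_div_two hθ_le) hr.1
    rwa [hF0] at h
  · have hcos : -1 < cos θ := neg_one_lt_cos_of_abs_lt_pi hθ
    have hF1_sq : F 1 ^ 2 = (1 - cos θ) / (1 + cos θ) := by
      rw [hF_sq, div_eq_div_iff (by linarith) (by linarith)]
      ring
    have hF1 : F 1 = |tan (θ / 2)| := by
      rw [← sq_eq_sq₀ (norm_nonneg _) (abs_nonneg _), sq_abs, tan_half_sq, hF1_sq]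
    have h := isGreatest_image_of_forall_le (f := F) (s := Set.Icc 0 1) (a := 1)
      ⟨zero_le_one, le_rfl⟩ fun r _ => hF_le <| by
        rw [hF_sq, hF1_sq]
        exact one_sub_div_one_add_le_of_nonpos hcos
          (cos_nonpos_of_pi_div_two_le_abs hθ_lt.le (by linarith [pi_pos])) r
    rwa [hF1] at h
end

section
/- Let α be a real number with 1 < α ≤ 2 and let a : (0,∞) → (0,∞) be monotone increasing with ∫_e^∞ a(x)/(x·(log x)^α) dx < ∞. Then ∫_1^∞ dt/(t·a(t)) = ∞. -/
open MeasureTheory Set Filter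

/-!
Split `[e, ∞)` according to whether `a x ≤ log x`. Where it is, `1/(x log x) ≤ 1/(x a x)`; where
it is not, `(log x)^α ≤ (log x)^2 ≤ a x · log x` because `α ≤ 2`, so
`1/(x log x) ≤ a x/(x (log x)^α)`. Hence `1/(x log x)` is bounded by the sum of the two integrands,
yet it is not integrable at infinity, being the derivative of `log ∘ log → ∞`. Monotonicity of `a`
makes `1/(x a x)` measurable, which splitting the integral of the sum requires.
-/

theorem not_integrableOn_Ici_inv_mul_log (a : ℝ) :
    ¬ IntegrableOn (fun x => (x * Real.log x)⁻¹) (Ici a) := by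
  have hderiv : ∀ᶠ x in atTop,
      HasDerivAt (fun y => Real.log (Real.log y)) (x * Real.log x)⁻¹ x := by
    filter_upwards [Ioi_mem_atTop 1] with x hx
    have hx0 : x ≠ 0 := (zero_lt_one.trans hx).ne'
    simpa [div_eq_mul_inv, mul_inv, mul_comm] using
      (Real.hasDerivAt_log hx0).log (Real.log_pos hx).ne'
  have htendsto : Tendsto (fun x => ‖Real.log (Real.log x)‖) atTop atTop :=
    tendsto_norm_atTop_atTop.comp (Real.tendsto_log_atTop.comp Real.tendsto_log_atTop)
  exact not_integrableOn_of_tendsto_norm_atTop_of_deriv_isBigO_filter atTop (Ici_mem_atTop a)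
    (hderiv.mono fun _ hx => hx.differentiableAt) htendsto
    (EventuallyEq.isBigO (hderiv.mono fun _ hx => hx.deriv))

theorem lintegral_Ici_one_div_mul_log_eq_top {a : ℝ} (ha : 1 ≤ a) :
    ∫⁻ x in Ici a, ENNReal.ofReal (1 / (x * Real.log x)) = ⊤ := by
  by_contra h
  have hnonneg : 0 ≤ᵐ[volume.restrict (Ici a)] fun x => 1 / (x * Real.log x) := by
    refine (ae_restrict_iff' measurableSet_Ici).2 (ae_of_all _ fun x (hx : a ≤ x) => ?_)
    have hx : 1 ≤ x := ha.trans hx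
    have := Real.log_nonneg hx
    positivity
  have hmeas : AEStronglyMeasurable (fun x => 1 / (x * Real.log x)) (volume.restrict (Ici a)) :=
    (measurable_const.div (measurable_id.mul Real.measurable_log)).aestronglyMeasurable
  exact not_integrableOn_Ici_inv_mul_log a <| by
    simpa only [one_div, IntegrableOn] using
      (lintegral_ofReal_ne_top_iff_integrable hmeas hnonneg).1 h

theorem one_div_mul_le_one_div_mul_add_div_mul_rpow {x L b α : ℝ} (hx : 0 < x) (hL : 1 ≤ L)
    (hb : 0 < b) (hα : α ≤ 2) :
    1 / (x * L) ≤ 1 / (x * b) + b / (x * L ^ α) := by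
  have hL0 : 0 < L := zero_lt_one.trans_le hL
  rcases le_total b L with hbL | hLb
  · have : 1 / (x * L) ≤ 1 / (x * b) := by gcongr
    have : 0 ≤ b / (x * L ^ α) := by positivity
    linarith
  · have hpow : L ^ α ≤ b * L :=
      calc L ^ α ≤ L ^ (2 : ℝ) := Real.rpow_le_rpow_of_exponent_le hL hα
        _ = L * L := by norm_num [sq]
        _ ≤ b * L := by gcongr
    have : 1 / (x * L) ≤ b / (x * L ^ α) := by
      rw [div_le_div_iff₀ (by positivity) (by positivity)]
      nlinarith
    have : 0 ≤ 1 / (x * b) := by positivity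
    linarith

theorem no_admissible_weight_general (α : ℝ) (hα₂ : α ≤ 2) (a : ℝ → ℝ)
    (ha_pos : ∀ x : ℝ, 0 < x → 0 < a x)
    (ha_mono : ∀ x y : ℝ, 0 < x → x ≤ y → a x ≤ a y)
    (hfin : ∫⁻ x in Set.Ici (Real.exp 1),
      ENNReal.ofReal (a x / (x * Real.log x ^ α)) < ⊤) :
    ∫⁻ t in Set.Ioi (1 : ℝ), ENNReal.ofReal (1 / (t * a t)) = ⊤ := by
  have one_lt_exp : 1 < Real.exp 1 := Real.one_lt_exp_iff.2 one_pos
  have hpos : ∀ x ∈ Ici (Real.exp 1), 0 < x := fun x hx => one_pos.trans (one_lt_exp.trans_le hx)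
  have ha_meas : AEMeasurable a (volume.restrict (Ici (Real.exp 1))) :=
    aemeasurable_restrict_of_monotoneOn measurableSet_Ici
      fun x hx _ _ hxy => ha_mono _ _ (hpos x hx) hxy
  have hmeas : AEMeasurable (fun x => ENNReal.ofReal (1 / (x * a x)))
      (volume.restrict (Ici (Real.exp 1))) :=
    ((aemeasurable_id.mul ha_meas).const_div 1).ennreal_ofReal
  have hbound : ∀ x ∈ Ici (Real.exp 1), ENNReal.ofReal (1 / (x * Real.log x)) ≤
      ENNReal.ofReal (1 / (x * a x)) + ENNReal.ofReal (a x / (x * Real.log x ^ α)) := by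
    intro x hx
    have hlog : 1 ≤ Real.log x := by simpa using Real.log_le_log (Real.exp_pos 1) hx
    exact (ENNReal.ofReal_le_ofReal <| one_div_mul_le_one_div_mul_add_div_mul_rpow (hpos x hx)
      hlog (ha_pos x (hpos x hx)) hα₂).trans ENNReal.ofReal_add_le
  have htop : ⊤ ≤ (∫⁻ t in Ioi 1, ENNReal.ofReal (1 / (t * a t))) +
      ∫⁻ x in Ici (Real.exp 1), ENNReal.ofReal (a x / (x * Real.log x ^ α)) :=
    calc ⊤ = ∫⁻ x in Ici (Real.exp 1), ENNReal.ofReal (1 / (x * Real.log x)) :=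
          (lintegral_Ici_one_div_mul_log_eq_top one_lt_exp.le).symm
      _ ≤ ∫⁻ x in Ici (Real.exp 1), (ENNReal.ofReal (1 / (x * a x)) +
            ENNReal.ofReal (a x / (x * Real.log x ^ α))) :=
          setLIntegral_mono' measurableSet_Ici hbound
      _ = _ := lintegral_add_left' hmeas _
      _ ≤ _ := add_le_add_left (lintegral_mono_set (Ici_subset_Ioi.2 one_lt_exp)) _
  exact (ENNReal.add_eq_top.1 (top_le_iff.1 htop)).resolve_right hfin.ne

/-- If `1 < α ≤ 2` and `a` is positive and monotone increasing on `(0,∞)` with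
`∫_e^∞ a(x)/(x (log x)^α) dx < ∞`, then `∫_1^∞ dt/(t·a(t)) = ∞`. -/
theorem no_admissible_weight (α : ℝ) (hα₁ : 1 < α) (hα₂ : α ≤ 2) (a : ℝ → ℝ)
    (ha_pos : ∀ x : ℝ, 0 < x → 0 < a x)
    (ha_mono : ∀ x y : ℝ, 0 < x → x ≤ y → a x ≤ a y)
    (hfin : ∫⁻ x in Set.Ici (Real.exp 1),
      ENNReal.ofReal (a x / (x * Real.log x ^ α)) < ⊤) :
    ∫⁻ t in Set.Ioi (1 : ℝ), ENNReal.ofReal (1 / (t * a t)) = ⊤ :=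
  no_admissible_weight_general α hα₂ a ha_pos ha_mono hfin
end

section
/- Let γ > 0 and let w ∈ F_∞, and let z denote the principal square root of w² + iγ. Then |z − w| ≥ |z + w|. -/
/-- The closed sector `F_∞ = {w : Re w ≤ 0 ≤ Im w, |Re w| ≥ 2·Im w}`. -/
def Finf : Set ℂ := {w : ℂ | w.re ≤ 0 ∧ 0 ≤ w.im ∧ 2 * w.im ≤ |w.re|}

/-!
Write `z = (w² + iγ)^{1/2}`. Since `|z + w|² - |z - w|² = 4⟪z, w⟫`, it suffices that `z` and `w`
make an obtuse angle. The sector condition gives `Re (w² + iγ) = Re w² ≥ 0`, so the principal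
root `z` lies in `|arg z| ≤ π/4`, while `w` lies in `3π/4 ≤ arg w ≤ π`.
-/

open Complex

theorem norm_add_le_norm_sub_of_real_inner_nonpos {F : Type*} [NormedAddCommGroup F]
    [InnerProductSpace ℝ F] {x y : F} (h : inner ℝ x y ≤ 0) : ‖x + y‖ ≤ ‖x - y‖ := by
  refine (sq_le_sq₀ (norm_nonneg _) (norm_nonneg _)).1 ?_
  rw [norm_add_sq_real, norm_sub_sq_real]
  linarith

namespace Complex

theorem abs_im_cpow_inv_two_le_re {x : ℂ} (hx : 0 ≤ x.re) :
    |(x ^ (2⁻¹ : ℂ)).im| ≤ (x ^ (2⁻¹ : ℂ)).re := by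
  rw [abs_cpow_inv_two_im, cpow_inv_two_re]
  gcongr
  linarith

theorem real_inner_nonpos_of_abs_im_le_re {z w : ℂ} (hz : |z.im| ≤ z.re)
    (hw_im : 0 ≤ w.im) (hw : w.im ≤ -w.re) : inner ℝ z w ≤ 0 := by
  have hz_re : 0 ≤ z.re := (abs_nonneg _).trans hz
  calc inner ℝ z w = z.re * w.re + z.im * w.im := by
        rw [Complex.inner, mul_re, conj_re, conj_im]; ring
    _ ≤ z.re * w.re + |z.im| * w.im := by gcongr; exact le_abs_self _
    _ ≤ z.re * w.re + z.re * w.im := by gcongr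
    _ = z.re * (w.re + w.im) := by ring
    _ ≤ 0 := mul_nonpos_of_nonneg_of_nonpos hz_re (by linarith)

end Complex

theorem im_le_neg_re_of_mem_Finf {w : ℂ} (hw : w ∈ Finf) : w.im ≤ -w.re := by
  obtain ⟨hre, him, hsec⟩ := hw
  rw [abs_of_nonpos hre] at hsec
  linarith

theorem re_sq_nonneg_of_mem_Finf {w : ℂ} (hw : w ∈ Finf) : 0 ≤ (w ^ 2).re := by
  have hsec := im_le_neg_re_of_mem_Finf hw
  rw [sq, mul_re, sub_nonneg]
  nlinarith [hw.2.1]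

theorem sector_sqrt_abs_sub_ge_abs_add_general (γ : ℝ) (w : ℂ) (hw : w ∈ Finf) :
    ‖(w ^ 2 + Complex.I * γ) ^ ((1 : ℂ) / 2) + w‖ ≤
      ‖(w ^ 2 + Complex.I * γ) ^ ((1 : ℂ) / 2) - w‖ := by
  have hx : 0 ≤ (w ^ 2 + I * γ).re := by simpa using re_sq_nonneg_of_mem_Finf hw
  rw [one_div]
  exact norm_add_le_norm_sub_of_real_inner_nonpos <|
    real_inner_nonpos_of_abs_im_le_re (abs_im_cpow_inv_two_le_re hx) hw.2.1
      (im_le_neg_re_of_mem_Finf hw)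

/-- For `γ > 0`, `w ∈ F_∞` and `z` the principal square root of `w² + iγ`,
one has `|z − w| ≥ |z + w|`. -/
theorem sector_sqrt_abs_sub_ge_abs_add (γ : ℝ) (hγ : 0 < γ) (w : ℂ) (hw : w ∈ Finf) :
    ‖(w ^ 2 + Complex.I * γ) ^ ((1 : ℂ) / 2) + w‖ ≤
      ‖(w ^ 2 + Complex.I * γ) ^ ((1 : ℂ) / 2) - w‖ :=
  sector_sqrt_abs_sub_ge_abs_add_general γ w hw
end

section
/- For every γ > 0 and every w ∈ F_∞, one has |w² + iγ| ≥ (3/5)·γ; in particular |w² + iγ| > γ/2. -/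
/-!
Squaring maps `F_∞` onto the sector between the rays through `1` and `3 - 4i`, which lies in the
half-plane `⟪4 + 3i, ·⟫ ≥ 0` bounded by the line through `3 - 4i`. The point `-iγ` is at distance
`3γ/5` from that line, so `|w² + iγ| ≥ ⟪4 + 3i, w² + iγ⟫ / 5 ≥ 3γ/5`.
-/

open Complex

lemma norm_four_add_three_mul_I : ‖(4 + 3 * I : ℂ)‖ = 5 := by
  rw [norm_def, normSq_apply, Real.sqrt_eq_iff_mul_self_eq_of_pos (by norm_num)]
  simp only [add_re, add_im, mul_re, mul_im, I_re, I_im, re_ofNat, im_ofNat]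
  norm_num

lemma inner_sq_nonneg_of_mem_Finf {w : ℂ} (hw : w ∈ Finf) : 0 ≤ inner ℝ (4 + 3 * I) (w ^ 2) := by
  obtain ⟨hre, him, hreim⟩ := hw
  rw [abs_of_nonpos hre] at hreim
  have hfactor : inner ℝ (4 + 3 * I) (w ^ 2) = 2 * ((2 * w.re - w.im) * (w.re + 2 * w.im)) := by
    simp only [Complex.inner, pow_two, mul_re, mul_im, conj_re, conj_im, add_re, add_im, I_re,
      I_im, re_ofNat, im_ofNat]
    ring
  rw [hfactor]
  exact mul_nonneg zero_le_two (mul_nonneg_of_nonpos_of_nonpos (by linarith) (by linarith))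

lemma three_fifths_mul_le_norm_sq_add_I_mul_of_mem_Finf {w : ℂ} (hw : w ∈ Finf) (γ : ℝ) :
    3 / 5 * γ ≤ ‖w ^ 2 + I * γ‖ := by
  have hshift : inner ℝ (4 + 3 * I) (I * γ) = 3 * γ := by
    simp [Complex.inner, mul_comm]
  have hbound : 3 * γ ≤ 5 * ‖w ^ 2 + I * γ‖ := calc
    3 * γ ≤ inner ℝ (4 + 3 * I) (w ^ 2) + inner ℝ (4 + 3 * I) (I * γ) := by
      linarith [inner_sq_nonneg_of_mem_Finf hw]
    _ = inner ℝ (4 + 3 * I) (w ^ 2 + I * γ) := (inner_add_right _ _ _).symm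
    _ ≤ ‖(4 + 3 * I : ℂ)‖ * ‖w ^ 2 + I * γ‖ := real_inner_le_norm _ _
    _ = 5 * ‖w ^ 2 + I * γ‖ := by rw [norm_four_add_three_mul_I]
  linarith

/-- For every `γ > 0` and `w ∈ F_∞`: `|w² + iγ| ≥ (3/5)·γ`, in particular
`|w² + iγ| > γ/2`. -/
theorem sector_abs_sq_add_I_gamma (γ : ℝ) (hγ : 0 < γ) (w : ℂ) (hw : w ∈ Finf) :
    (3 / 5) * γ ≤ ‖w ^ 2 + Complex.I * γ‖ ∧
    γ / 2 < ‖w ^ 2 + Complex.I * γ‖ := by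
  have hle := three_fifths_mul_le_norm_sq_add_I_mul_of_mem_Finf hw γ
  exact ⟨hle, by linarith⟩
end
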